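/- In the VW-CCG grammar of Example 3.3 of Vijay-Shanker and Weir (1994), every string of the form aⁿbⁿ (n ≥ 0) and every string of the form (ab)ⁿ (n ≥ 0) is generated; in particular the language of the grammar strictly contains {aⁿbⁿ : n ≥ 0}. -/
import Mathlib



/-- Categories of VW-CCG over atomic categories coded by natural numbers.
`slash d X Y` is `X /ᵈ Y` where `d = true` is a forward slash `/` and
`d = false` is a backward slash `\`. -/
inductive Cat : Type where
  | atom : ℕ → Cat
  | slash : Bool → Cat → Cat → Cat
deriving DecidableEq

namespace Cat

/-- The target (innermost atomic category). -/
def target : Cat → ℕ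
  | atom a => a
  | slash _ X _ => X.target

/-- The argument stack of a category, bottom of the stack first. -/
def args : Cat → List (Bool × Cat)
  | atom _ => []
  | slash d X Y => X.args ++ [(d, Y)]

/-- The number of arguments of a category. -/
def numArgs (X : Cat) : ℕ := X.args.length

/-- The size (number of symbols) of a category. -/
def size : Cat → ℕ
  | atom _ => 1
  | slash _ X Y => X.size + Y.size + 1

/-- `ArgOccurs p X` holds if the slash–category pair `p` occurs as an
argument somewhere inside the category `X`. -/
def ArgOccurs (p : Bool × Cat) : Cat → Prop
  | atom _ => False
  | slash d X Y => (d, Y) = p ∨ ArgOccurs p X ∨ ArgOccurs p Y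

end Cat

/-- Build `A /₁ X₁ ⋯ /ₘ Xₘ` from a target and an argument list. -/
def Cat.mk' (t : ℕ) (as : List (Bool × Cat)) : Cat :=
  as.foldl (fun c p => Cat.slash p.1 c p.2) (Cat.atom t)

/-- Push additional arguments on the stack of a category. -/
def appendArgs (X : Cat) (zs : List (Bool × Cat)) : Cat :=
  zs.foldl (fun c p => Cat.slash p.1 c p.2) X

/-- A VW-CCG combinatory rule: a (forward or backward) combinatory schema of
degree `zRestr.length`, optionally restricting the target of the variable `X`,
the category `Y`, and the slashes and categories of the arguments
`/₁ Z₁ ⋯ /_d Z_d` of the secondary input. -/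
structure Rule where
  fwd : Bool
  tRestr : Option ℕ
  yRestr : Option Cat
  zRestr : List (Bool × Option Cat)

/-- The degree of a rule. -/
def Rule.degree (r : Rule) : ℕ := r.zRestr.length

/-- `r.Inst L R O` holds if `L R ⇛ O` is a ground instance of the rule `r`:
forward: `X/Y  Y/₁Z₁⋯/_dZ_d ⇛ X/₁Z₁⋯/_dZ_d`;
backward: `Y/₁Z₁⋯/_dZ_d  X\Y ⇛ X/₁Z₁⋯/_dZ_d`, respecting the restrictions. -/
def Rule.Inst (r : Rule) (L R O : Cat) : Prop :=
  ∃ (X Y : Cat) (zs : List (Bool × Cat)),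
    (∀ t, r.tRestr = some t → X.target = t) ∧
    (∀ Y', r.yRestr = some Y' → Y = Y') ∧
    List.Forall₂ (fun (p : Bool × Option Cat) (z : Bool × Cat) =>
      z.1 = p.1 ∧ ∀ Z, p.2 = some Z → z.2 = Z) r.zRestr zs ∧
    O = appendArgs X zs ∧
    (if r.fwd then L = Cat.slash true X Y ∧ R = appendArgs Y zs
     else R = Cat.slash false X Y ∧ L = appendArgs Y zs)

/-- A VW-CCG grammar: a finite lexicon assigning categories to vocabulary
symbols (coded by naturals) or to the empty string (`none`), a finite set of
combinatory rules, and a distinguished atomic category. -/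
structure Grammar where
  lex : List (Option ℕ × Cat)
  rules : List Rule
  start : ℕ

/-- A grammar is ε-free if no lexicon entry is for the empty string. -/
def Grammar.EpsFree (G : Grammar) : Prop := ∀ e ∈ G.lex, e.1 ≠ none

/-- Derivation trees: leaves carry lexicon entries (`none` = empty string),
internal nodes carry categories and have exactly two children. -/
inductive DTree where
  | leaf : Option ℕ → Cat → DTree
  | node : Cat → DTree → DTree → DTree

namespace DTree

/-- The category at the root. -/
def top : DTree → Cat
  | leaf _ X => X
  | node X _ _ => X

/-- The yield: left-to-right concatenation of the symbols at the leaves. -/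
def yield : DTree → List ℕ
  | leaf none _ => []
  | leaf (some σ) _ => [σ]
  | node _ l r => l.yield ++ r.yield

/-- The total number of nodes. -/
def nodes : DTree → ℕ
  | leaf _ _ => 1
  | node _ l r => l.nodes + r.nodes + 1

/-- `τ.Valid G`: `τ` is a derivation tree of the grammar `G`. -/
def Valid (G : Grammar) : DTree → Prop
  | leaf σ X => (σ, X) ∈ G.lex
  | node X l r => Valid G l ∧ Valid G r ∧ ∃ rl ∈ G.rules, rl.Inst l.top r.top X

/-- `τ.CatAt C`: the category `C` labels some node of `τ`. -/
def CatAt : DTree → Cat → Prop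
  | leaf _ X, C => C = X
  | node X l r, C => C = X ∨ l.CatAt C ∨ r.CatAt C

end DTree

/-- The language generated by a grammar. -/
def Grammar.Lang (G : Grammar) : Set (List ℕ) :=
  { w | ∃ τ : DTree, τ.Valid G ∧ τ.top = Cat.atom G.start ∧ τ.yield = w }

/-- All lists of Booleans of a given length (slash combinations). -/
def boolLists : ℕ → List (List Bool)
  | 0 => [[]]
  | k + 1 => (boolLists k).flatMap fun l => [true :: l, false :: l]

/-- The VW-CCG grammar of Example 3.3 of Vijay-Shanker and Weir (1994).
Atoms: `0` = S, `1` = Ŝ, `2` = A, `3` = B, `4` = Â, `5` = B̂; vocabulary: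
`0` = a, `1` = b.  Lexicon: `a := A`, `b := B`, `ε := S\A/Ŝ/B`,
`ε := Ŝ\A/Ŝ/B`, `ε := S`, `ε := Ŝ`.  Rules: forward/backward application
with `Y ∈ {S, A, B}`, and forward composition of degree `0 ≤ d ≤ 3` with
the target of the secondary input restricted to a hatted category. -/
def vwExample : Grammar where
  lex := [(some 0, Cat.atom 2), (some 1, Cat.atom 3),
    (none, Cat.mk' 0 [(false, Cat.atom 2), (true, Cat.atom 1), (true, Cat.atom 3)]),
    (none, Cat.mk' 1 [(false, Cat.atom 2), (true, Cat.atom 1), (true, Cat.atom 3)]),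
    (none, Cat.atom 0), (none, Cat.atom 1)]
  rules :=
    (([0, 2, 3] : List ℕ).flatMap fun y =>
      [⟨true, none, some (Cat.atom y), []⟩, ⟨false, none, some (Cat.atom y), []⟩]) ++
    (([1, 4, 5] : List ℕ).flatMap fun yh =>
      (List.range 4).flatMap fun d =>
        (boolLists d).map fun ds =>
          ⟨true, none, some (Cat.atom yh), ds.map fun dd => (dd, none)⟩)
  start := 0

deriving instance DecidableEq for Rule

namespace VWProof

def Ac : Cat := Cat.atom 2
def Bc : Cat := Cat.atom 3
def Sc : Cat := Cat.atom 0
def Sh : Cat := Cat.atom 1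

/-- `S \ A \ ⋯ \ A` with `n` copies of `\A`. -/
def sb : ℕ → Cat
  | 0 => Sc
  | n + 1 => Cat.slash false (sb n) Ac

def Dc : Cat := Cat.slash true (Cat.slash true (sb 1) Sh) Bc
def Ec : Cat := Cat.slash true (Cat.slash true (Cat.slash false Sh Ac) Sh) Bc

def aleaf : DTree := DTree.leaf (some 0) Ac
def bleaf : DTree := DTree.leaf (some 1) Bc

def r_fB : Rule := ⟨true, none, some Bc, []⟩
def r_bA : Rule := ⟨false, none, some Ac, []⟩
def r_c0 : Rule := ⟨true, none, some Sh, []⟩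
def r_c3 : Rule := ⟨true, none, some Sh, [(false, none), (true, none), (true, none)]⟩

lemma r_fB_mem : r_fB ∈ vwExample.rules := by decide
lemma r_bA_mem : r_bA ∈ vwExample.rules := by decide
lemma r_c0_mem : r_c0 ∈ vwExample.rules := by decide
lemma r_c3_mem : r_c3 ∈ vwExample.rules := by decide

lemma inst_fB (X : Cat) : r_fB.Inst (Cat.slash true X Bc) Bc X := by
  refine ⟨X, Bc, [], ?_, ?_, ?_, rfl, ?_⟩ <;> simp [r_fB, appendArgs]

lemma inst_bA (X : Cat) : r_bA.Inst Ac (Cat.slash false X Ac) X := by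
  refine ⟨X, Ac, [], ?_, ?_, ?_, rfl, ?_⟩ <;> simp [r_bA, appendArgs]

lemma inst_c0 (X : Cat) : r_c0.Inst (Cat.slash true X Sh) Sh X := by
  refine ⟨X, Sh, [], ?_, ?_, ?_, rfl, ?_⟩ <;> simp [r_c0, appendArgs]

lemma inst_c3 (X : Cat) : r_c3.Inst (Cat.slash true X Sh) Ec
    (Cat.slash true (Cat.slash true (Cat.slash false X Ac) Sh) Bc) := by
  refine ⟨X, Sh, [(false, Ac), (true, Sh), (true, Bc)], ?_, ?_, ?_, rfl, ?_⟩ <;>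
    simp [r_c3, appendArgs, Ec, List.forall₂_cons]

lemma lv_D : (DTree.leaf none Dc).Valid vwExample := by
  show (none, Dc) ∈ vwExample.lex; decide
lemma lv_E : (DTree.leaf none Ec).Valid vwExample := by
  show (none, Ec) ∈ vwExample.lex; decide
lemma lv_Sh : (DTree.leaf none Sh).Valid vwExample := by
  show (none, Sh) ∈ vwExample.lex; decide
lemma lv_Sc : (DTree.leaf none Sc).Valid vwExample := by
  show (none, Sc) ∈ vwExample.lex; decide
lemma lv_a : aleaf.Valid vwExample := by
  show (some 0, Ac) ∈ vwExample.lex; decide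
lemma lv_b : bleaf.Valid vwExample := by
  show (some 1, Bc) ∈ vwExample.lex; decide

def gtree : ℕ → DTree
  | 0 => DTree.node (Cat.slash true (sb 1) Sh) (DTree.leaf none Dc) bleaf
  | k + 1 => DTree.node (Cat.slash true (sb (k + 2)) Sh)
      (DTree.node (Cat.slash true (Cat.slash true (sb (k + 2)) Sh) Bc)
        (gtree k) (DTree.leaf none Ec))
      bleaf

lemma gtree_top (k : ℕ) : (gtree k).top = Cat.slash true (sb (k + 1)) Sh := by
  cases k <;> rfl

lemma gtree_yield (k : ℕ) : (gtree k).yield = List.replicate (k + 1) 1 := by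
  induction k with
  | zero => rfl
  | succ k ih =>
    show ((gtree k).yield ++ []) ++ [1] = _
    rw [ih]
    simp [List.replicate_succ']

lemma gtree_valid (k : ℕ) : (gtree k).Valid vwExample := by
  induction k with
  | zero =>
    refine ⟨lv_D, lv_b, r_fB, r_fB_mem, ?_⟩
    exact inst_fB (Cat.slash true (sb 1) Sh)
  | succ k ih =>
    refine ⟨⟨ih, lv_E, r_c3, r_c3_mem, ?_⟩, lv_b, r_fB, r_fB_mem, ?_⟩
    · rw [gtree_top]
      have : (DTree.leaf none Ec).top = Ec := rfl
      rw [this]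
      exact inst_c3 (sb (k + 1))
    · exact inst_fB (Cat.slash true (sb (k + 2)) Sh)

def htree (k : ℕ) : DTree := DTree.node (sb (k + 1)) (gtree k) (DTree.leaf none Sh)

lemma htree_valid (k : ℕ) : (htree k).Valid vwExample := by
  refine ⟨gtree_valid k, lv_Sh, r_c0, r_c0_mem, ?_⟩
  rw [gtree_top]
  exact inst_c0 (sb (k + 1))

lemma htree_yield (k : ℕ) : (htree k).yield = List.replicate (k + 1) 1 := by
  show (gtree k).yield ++ [] = _
  rw [gtree_yield]; simp

def wa : ℕ → DTree → DTree
  | 0, t => t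
  | j + 1, t => wa j (DTree.node (sb j) aleaf t)

lemma wa_spec : ∀ (j : ℕ) (t : DTree), t.Valid vwExample → t.top = sb j →
    (wa j t).Valid vwExample ∧ (wa j t).top = Sc ∧
    (wa j t).yield = List.replicate j 0 ++ t.yield := by
  intro j
  induction j with
  | zero => intro t hv ht; exact ⟨hv, ht, rfl⟩
  | succ j ih =>
    intro t hv ht
    have hv' : (DTree.node (sb j) aleaf t).Valid vwExample := by
      refine ⟨lv_a, hv, r_bA, r_bA_mem, ?_⟩
      have : aleaf.top = Ac := rfl
      rw [this, ht]
      exact inst_bA (sb j)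
    obtain ⟨h1, h2, h3⟩ := ih (DTree.node (sb j) aleaf t) hv' rfl
    refine ⟨h1, h2, ?_⟩
    rw [show wa (j + 1) t = wa j (DTree.node (sb j) aleaf t) from rfl, h3]
    show List.replicate j 0 ++ ([0] ++ t.yield) = _
    simp [List.replicate_succ']

/-- trees for (ab)^k of category Ŝ -/
def ptree : ℕ → DTree
  | 0 => DTree.leaf none Sh
  | k + 1 => DTree.node Sh aleaf
      (DTree.node (Cat.slash false Sh Ac)
        (DTree.node (Cat.slash true (Cat.slash false Sh Ac) Sh) (DTree.leaf none Ec) bleaf)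
        (ptree k))

lemma ptree_top (k : ℕ) : (ptree k).top = Sh := by cases k <;> rfl

lemma ptree_yield (k : ℕ) : (ptree k).yield = (List.replicate k ([0,1] : List ℕ)).flatten := by
  induction k with
  | zero => rfl
  | succ k ih =>
    show [0] ++ (([] ++ [1]) ++ (ptree k).yield) = _
    rw [ih]
    simp [List.replicate_succ]

lemma ptree_valid (k : ℕ) : (ptree k).Valid vwExample := by
  induction k with
  | zero => exact lv_Sh
  | succ k ih =>
    refine ⟨lv_a, ⟨⟨lv_E, lv_b, r_fB, r_fB_mem,
        inst_fB (Cat.slash true (Cat.slash false Sh Ac) Sh)⟩, ih, r_c0, r_c0_mem, ?_⟩,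
      r_bA, r_bA_mem, inst_bA Sh⟩
    rw [show (DTree.node (Cat.slash true (Cat.slash false Sh Ac) Sh) (DTree.leaf none Ec) bleaf).top
        = Cat.slash true (Cat.slash false Sh Ac) Sh from rfl, ptree_top]
    exact inst_c0 (Cat.slash false Sh Ac)

def qtree : ℕ → DTree
  | 0 => DTree.leaf none Sc
  | k + 1 => DTree.node Sc aleaf
      (DTree.node (Cat.slash false Sc Ac)
        (DTree.node (Cat.slash true (Cat.slash false Sc Ac) Sh) (DTree.leaf none Dc) bleaf)
        (ptree k))

lemma qtree_valid (k : ℕ) : (qtree k).Valid vwExample := by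
  cases k with
  | zero => exact lv_Sc
  | succ k =>
    refine ⟨lv_a, ⟨⟨lv_D, lv_b, r_fB, r_fB_mem,
        inst_fB (Cat.slash true (Cat.slash false Sc Ac) Sh)⟩, ptree_valid k, r_c0, r_c0_mem, ?_⟩,
      r_bA, r_bA_mem, inst_bA Sc⟩
    rw [show (DTree.node (Cat.slash true (Cat.slash false Sc Ac) Sh) (DTree.leaf none Dc) bleaf).top
        = Cat.slash true (Cat.slash false Sc Ac) Sh from rfl, ptree_top]
    exact inst_c0 (Cat.slash false Sc Ac)

lemma qtree_top (k : ℕ) : (qtree k).top = Cat.atom 0 := by cases k <;> rfl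

lemma qtree_yield (k : ℕ) : (qtree k).yield = (List.replicate k ([0,1] : List ℕ)).flatten := by
  cases k with
  | zero => rfl
  | succ k =>
    show [0] ++ (([] ++ [1]) ++ (ptree k).yield) = _
    rw [ptree_yield]
    simp [List.replicate_succ]

lemma anbn_mem (k : ℕ) :
    (List.replicate k 0 ++ List.replicate k 1) ∈ vwExample.Lang := by
  cases k with
  | zero => exact ⟨DTree.leaf none Sc, lv_Sc, rfl, rfl⟩
  | succ k =>
    obtain ⟨h1, h2, h3⟩ := wa_spec (k + 1) (htree k) (htree_valid k) rfl
    exact ⟨wa (k + 1) (htree k), h1, h2, by rw [h3, htree_yield]⟩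

lemma abk_mem (k : ℕ) :
    (List.replicate k ([0, 1] : List ℕ)).flatten ∈ vwExample.Lang :=
  ⟨qtree k, qtree_valid k, qtree_top k, qtree_yield k⟩

end VWProof

/-- The grammar of Example 3.3 generates every `aⁿbⁿ` and every `(ab)ⁿ`;
in particular its language strictly contains `{aⁿbⁿ : n ≥ 0}`. -/
theorem vwExample_language :
    (∀ k : ℕ, (List.replicate k 0 ++ List.replicate k 1) ∈ vwExample.Lang) ∧
    (∀ k : ℕ, (List.replicate k ([0, 1] : List ℕ)).flatten ∈ vwExample.Lang) ∧
    { w : List ℕ | ∃ k : ℕ, w = List.replicate k 0 ++ List.replicate k 1 }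
      ⊂ vwExample.Lang := by
  refine ⟨VWProof.anbn_mem, VWProof.abk_mem, ?_⟩
  rw [Set.ssubset_def]
  constructor
  · rintro w ⟨k, rfl⟩; exact VWProof.anbn_mem k
  · intro h
    have hmem : ([0, 1, 0, 1] : List ℕ) ∈ vwExample.Lang := by
      simpa using VWProof.abk_mem 2
    obtain ⟨k, hk⟩ := h hmem
    have hl := congrArg List.length hk
    simp at hl
    have hk2 : k = 2 := by omega
    subst hk2
    exact absurd hk (by decide)
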